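/- (Theorem 2, boundedness.) Assume h(τ) > 0, let q > 1, define ζ(t) := [h(τ)·ν(τ) + ∫_τ^t β(ξ)·ν(ξ) dξ]/ν(t) for t ≥ τ, and assume α(t)·σ(t)^p·(q·ζ(t))^p ≤ (q−1)·β(t) for all t ≥ τ. If additionally M := sup_{t ≥ τ} ∫_τ^t γ(ξ) dξ < ∞ and the improper integral ∫_τ^∞ β(ξ)·ν(ξ) dξ converges, then u is bounded on [−τ, ∞), i.e., sup_{t ≥ −τ} ‖u(t)‖ < ∞. -/

import Mathlib

open Real MeasureTheory Set Filter ComplexInnerProductSpace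

/-!
Comparison: on each interval `[nτ, (n+1)τ]` the delayed argument of `u` lies where `‖u‖ ≤ h` is
already known, and the identity `‖u‖ · ‖u‖' = Re ⟪u, u̇⟫` turns the hypothesis on `u` into a
differential inequality for `‖u‖` that `h` satisfies with equality; an `ε e^{Ct}` fence then
gives `‖u‖ ≤ h` on `[-τ, ∞)`.

Boundedness: `w = h ν` is nondecreasing, so `h (t - τ) ≤ σ(t) h(t)`. Put
`Z(t) = h(τ) ν(τ) + ∫_τ^t β ν`, so that `ζ = Z / ν`. While `w < q Z`, i.e. `h < q ζ`, the
condition on `α` gives `α h(t-τ)^p ≤ (q - 1) β`, hence `w' ≤ q β ν = q Z'`; since `w(τ) < q Z(τ)`,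
the inequality `w < q Z` never fails. Finally `Z` is bounded because `β ν` is integrable, and
`1 / ν` is bounded because `∫_τ^t γ ≤ M`.
-/

/-- `ν(t) = exp(−∫₀ᵗ γ(ξ) dξ)`. -/
noncomputable def nu (γ : ℝ → ℝ) (t : ℝ) : ℝ := Real.exp (-∫ ξ in (0:ℝ)..t, γ ξ)

/-- `σ(t) = exp(−∫_{t−τ}^t γ(ξ) dξ)`. -/
noncomputable def sig (γ : ℝ → ℝ) (τ t : ℝ) : ℝ :=
  Real.exp (-∫ ξ in (t - τ)..t, γ ξ)

theorem le_of_deriv_right_le_add_mul_sub {f f' g g' γ : ℝ → ℝ} {a b : ℝ}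
    (hγ : ContinuousOn γ (Icc a b)) (hf : ContinuousOn f (Icc a b))
    (hf' : ∀ x ∈ Ico a b, HasDerivWithinAt f (f' x) (Ici x) x)
    (hg : ContinuousOn g (Icc a b))
    (hg' : ∀ x ∈ Ico a b, HasDerivWithinAt g (g' x) (Ici x) x) (ha : f a ≤ g a)
    (bound : ∀ x ∈ Ico a b, g x < f x → f' x ≤ g' x + γ x * (f x - g x)) :
    ∀ ⦃x⦄, x ∈ Icc a b → f x ≤ g x := by
  obtain ⟨C, hC⟩ := isCompact_Icc.exists_bound_of_continuousOn hγ
  -- Since `γ < C + 1` on `[a, b]`, every `g + ε e^{(C+1)(x-a)}` with `ε > 0` is a strict fence.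
  have fence : ∀ ε > 0, ∀ x ∈ Icc a b, f x ≤ g x + ε * exp ((C + 1) * (x - a)) := by
    intro ε hε
    have hE : ∀ x, HasDerivAt (fun t => ε * exp ((C + 1) * (t - a)))
        (ε * exp ((C + 1) * (x - a)) * (C + 1)) x := fun x => by
      simpa [mul_assoc] using
        ((((hasDerivAt_id x).sub_const a).const_mul (C + 1)).exp.const_mul ε)
    have ha' : f a ≤ g a + ε * exp ((C + 1) * (a - a)) := by simp; linarith
    refine image_le_of_deriv_right_lt_deriv_boundary' hf hf' ha' (hg.add (by fun_prop))
      (fun x hx => (hg' x hx).add (hE x).hasDerivWithinAt) fun x hx hfx => ?_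
    have hpos : 0 < ε * exp ((C + 1) * (x - a)) := by positivity
    have hγx : γ x < C + 1 :=
      ((le_abs_self _).trans (hC x (Ico_subset_Icc_self hx))).trans_lt (lt_add_one C)
    calc f' x ≤ g' x + γ x * (f x - g x) := bound x hx (by rw [hfx]; linarith)
      _ < g' x + ε * exp ((C + 1) * (x - a)) * (C + 1) := by
        rw [hfx, add_sub_cancel_left, mul_comm _ (C + 1)]
        gcongr
  intro x hx
  refine le_of_forall_pos_le_add fun δ hδ => ?_
  simpa [div_mul_cancel₀] using fence (δ / exp ((C + 1) * (x - a))) (by positivity) x hx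

theorem le_of_delay_deriv_right_le_add_mul_sub {f f' g g' γ : ℝ → ℝ} {τ : ℝ} (hτ : 0 < τ)
    (hγ : ContinuousOn γ (Ici 0)) (hf : ContinuousOn f (Ici (-τ)))
    (hf' : ∀ x, 0 ≤ x → HasDerivWithinAt f (f' x) (Ici x) x)
    (hg : ContinuousOn g (Ici (-τ)))
    (hg' : ∀ x, 0 ≤ x → HasDerivWithinAt g (g' x) (Ici x) x)
    (hinit : ∀ x ∈ Icc (-τ) 0, f x ≤ g x)
    (bound : ∀ x, 0 ≤ x → f (x - τ) ≤ g (x - τ) → g x < f x →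
      f' x ≤ g' x + γ x * (f x - g x)) :
    ∀ x, -τ ≤ x → f x ≤ g x := by
  suffices steps : ∀ n : ℕ, ∀ x ∈ Icc (-τ) (n * τ), f x ≤ g x by
    intro x hx
    obtain ⟨n, hn⟩ := exists_nat_ge (x / τ)
    exact steps n x ⟨hx, (div_le_iff₀ hτ).mp hn⟩
  intro n
  induction n with
  | zero => simpa using hinit
  | succ n ih =>
    intro x ⟨hx₁, hx₂⟩
    rcases le_or_gt x (n * τ) with hx | hx
    · exact ih x ⟨hx₁, hx⟩
    have hn : 0 ≤ (n : ℝ) * τ := by positivity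
    have sub : Icc ((n : ℝ) * τ) ((n + 1 : ℕ) * τ) ⊆ Ici (-τ) := fun y hy => by
      simp only [mem_Ici]; linarith [hy.1]
    have hdelay : ∀ y ∈ Ico ((n : ℝ) * τ) ((n + 1 : ℕ) * τ), f (y - τ) ≤ g (y - τ) :=
      fun y ⟨hy₁, hy₂⟩ => ih _ ⟨by linarith, by push_cast at hy₂; linarith⟩
    exact le_of_deriv_right_le_add_mul_sub (hγ.mono fun y hy => hn.trans hy.1) (hf.mono sub)
      (fun y hy => hf' y (hn.trans hy.1)) (hg.mono sub) (fun y hy => hg' y (hn.trans hy.1))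
      (ih _ ⟨by linarith, le_rfl⟩) (fun y hy => bound y (hn.trans hy.1) (hdelay y hy))
      ⟨hx.le, hx₂⟩

theorem HasDerivWithinAt.norm_mul_eq_re_inner {H : Type*} [NormedAddCommGroup H]
    [InnerProductSpace ℂ H] {u : ℝ → H} {u' : H} {n' : ℝ} {s : Set ℝ} {x : ℝ}
    (hu : HasDerivWithinAt u u' s x) (hn : HasDerivWithinAt (fun t => ‖u t‖) n' s x)
    (hs : UniqueDiffWithinAt ℝ s x) : ‖u x‖ * n' = (⟪u x, u'⟫).re := by
  let _ : InnerProductSpace ℝ H := InnerProductSpace.complexToReal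
  have h := hs.eq_deriv _ (hn.pow 2) hu.norm_sq
  rw [real_inner_eq_re_inner ℂ, pow_one, RCLike.re_to_complex, Nat.cast_ofNat] at h
  linarith

theorem image_lt_of_deriv_right_le_deriv_of_lt {w w' W W' : ℝ → ℝ} {a : ℝ}
    (hw : ContinuousOn w (Ici a)) (hw' : ∀ x, a ≤ x → HasDerivWithinAt w (w' x) (Ici x) x)
    (hW : ContinuousOn W (Ici a)) (hW' : ∀ x, a ≤ x → HasDerivWithinAt W (W' x) (Ici x) x)
    (ha : w a < W a) (bound : ∀ x, a ≤ x → w x < W x → w' x ≤ W' x) :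
    ∀ x, a ≤ x → w x < W x := by
  by_contra! hex
  set T := {x ∈ Ici a | W x ≤ w x}
  have hT : IsClosed T := isClosed_Ici.isClosed_le hW hw
  have hTbdd : BddBelow T := ⟨a, fun x hx => hx.1⟩
  -- `t₀` is the first time at which `w` reaches `W`.
  set t₀ := sInf T
  have ht₀ : t₀ ∈ T := hT.csInf_mem hex hTbdd
  have hbefore : ∀ x ∈ Ico a t₀, w x < W x := fun x hx =>
    not_le.1 fun hle => notMem_of_lt_csInf hx.2 hTbdd ⟨hx.1, hle⟩
  have hat₀ : a < t₀ := ht₀.1.lt_of_ne fun h => (h ▸ ha).not_ge ht₀.2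
  have hsub : Icc a t₀ ⊆ Ici a := Icc_subset_Ici_self
  have hle := image_le_of_deriv_right_le_deriv_boundary (hw.mono hsub)
    (fun x hx => hw' x hx.1) (B := fun x => W x - (W a - w a)) (by simp)
    ((hW.mono hsub).sub continuousOn_const) (fun x hx => (hW' x hx.1).sub_const _)
    (fun x hx => bound x hx.1 (hbefore x hx)) (right_mem_Icc.2 hat₀.le)
  linarith [ht₀.2]

section Nu

variable {γ : ℝ → ℝ}

theorem nu_pos (γ : ℝ → ℝ) (t : ℝ) : 0 < nu γ t := exp_pos _

theorem sig_pos (γ : ℝ → ℝ) (τ t : ℝ) : 0 < sig γ τ t := exp_pos _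

theorem hasDerivAt_nu (hγ : Continuous γ) (t : ℝ) : HasDerivAt (nu γ) (-γ t * nu γ t) t := by
  have hI := intervalIntegral.integral_hasDerivAt_right (hγ.intervalIntegrable 0 t)
    (hγ.stronglyMeasurableAtFilter volume _) hγ.continuousAt
  exact hI.neg.exp.congr_deriv (mul_comm _ _)

theorem continuous_nu (hγ : Continuous γ) : Continuous (nu γ) :=
  continuous_iff_continuousAt.2 fun t => (hasDerivAt_nu hγ t).continuousAt

theorem nu_eq_mul_exp (hγ : Continuous γ) (s t : ℝ) :
    nu γ t = nu γ s * exp (-∫ ξ in s..t, γ ξ) := by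
  rw [nu, nu, ← exp_add, ← intervalIntegral.integral_add_adjacent_intervals
    (hγ.intervalIntegrable 0 s) (hγ.intervalIntegrable s t), neg_add]

theorem HasDerivWithinAt.mul_nu (hγ : Continuous γ) {h : ℝ → ℝ} {h' : ℝ} {s : Set ℝ} {x : ℝ}
    (hh : HasDerivWithinAt h h' s x) :
    HasDerivWithinAt (fun t => h t * nu γ t) ((h' - γ x * h x) * nu γ x) s x :=
  (hh.mul (hasDerivAt_nu hγ x).hasDerivWithinAt).congr_deriv (by ring)

theorem monotoneOn_mul_nu (hγ : Continuous γ) {h h' : ℝ → ℝ} {a : ℝ}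
    (hc : ContinuousOn h (Ici a)) (hd : ∀ x, a ≤ x → HasDerivWithinAt h (h' x) (Ici x) x)
    (hle : ∀ x, a ≤ x → γ x * h x ≤ h' x) :
    MonotoneOn (fun t => h t * nu γ t) (Ici a) := by
  intro s hs t ht hst
  refine image_le_of_deriv_right_le_deriv_boundary (f' := 0) continuousOn_const
    (fun _ _ => hasDerivWithinAt_const _ _ _) le_rfl
    ((hc.mul (continuous_nu hγ).continuousOn).mono (Icc_subset_Ici_iff hst |>.2 hs))
    (fun x hx => (hd x (le_trans hs hx.1)).mul_nu hγ)
    (fun x hx => mul_nonneg (sub_nonneg.2 (hle x (le_trans hs hx.1))) (nu_pos γ x).le)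
    (right_mem_Icc.2 hst)

theorem le_sig_mul_of_monotoneOn (hγ : Continuous γ) {h : ℝ → ℝ} {τ t : ℝ}
    (hmono : MonotoneOn (fun t => h t * nu γ t) (Ici 0)) (hτ : 0 ≤ τ) (ht : τ ≤ t) :
    h (t - τ) ≤ sig γ τ t * h t := by
  have hw : h (t - τ) * nu γ (t - τ) ≤ h t * nu γ t :=
    hmono (mem_Ici.2 (sub_nonneg.2 ht)) (mem_Ici.2 (hτ.trans ht)) (by linarith)
  rw [nu_eq_mul_exp hγ (t - τ) t, ← sig] at hw
  nlinarith [nu_pos γ (t - τ)]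

end Nu

theorem norm_le_of_delay_comparison {H : Type*} [NormedAddCommGroup H] [InnerProductSpace ℂ H]
    {τ p : ℝ} (hτ : 0 < τ) (hp : 0 ≤ p) {γ α β : ℝ → ℝ} (hγ : Continuous γ)
    (hα : ∀ t, 0 ≤ α t) {u u' : ℝ → H} (huc : ContinuousOn u (Ici (-τ)))
    (hud : ∀ t, 0 ≤ t → HasDerivWithinAt u (u' t) (Ici 0) t)
    (hnd : ∀ t, 0 ≤ t → DifferentiableWithinAt ℝ (fun s => ‖u s‖) (Ici 0) t)
    (huineq : ∀ t, 0 ≤ t → (⟪u t, u' t⟫).re ≤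
      γ t * ‖u t‖ ^ 2 + α t * ‖u t‖ * ‖u (t - τ)‖ ^ p + β t * ‖u t‖)
    {h h' : ℝ → ℝ} (hh0 : ∀ t, 0 ≤ t → 0 ≤ h t) (hhc : ContinuousOn h (Ici (-τ)))
    (hhd : ∀ t, 0 ≤ t → HasDerivWithinAt h (h' t) (Ici 0) t)
    (hheq : ∀ t, 0 ≤ t → γ t * h t + α t * h (t - τ) ^ p + β t ≤ h' t)
    (hinit : ∀ t ∈ Icc (-τ) 0, ‖u t‖ ≤ h t) :
    ∀ t, -τ ≤ t → ‖u t‖ ≤ h t := by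
  have hn : ∀ x, 0 ≤ x → HasDerivWithinAt (fun s => ‖u s‖)
      (derivWithin (fun s => ‖u s‖) (Ici 0) x) (Ici 0) x := fun x hx => (hnd x hx).hasDerivWithinAt
  refine le_of_delay_deriv_right_le_add_mul_sub hτ hγ.continuousOn huc.norm
    (fun x hx => (hn x hx).mono (Ici_subset_Ici.2 hx)) hhc
    (fun x hx => (hhd x hx).mono (Ici_subset_Ici.2 hx)) hinit fun x hx hdelay hlt => ?_
  have hpos : 0 < ‖u x‖ := (hh0 x hx).trans_lt hlt
  have hid := (hud x hx).norm_mul_eq_re_inner (hn x hx) (uniqueDiffOn_Ici 0 x hx)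
  have hnorm : derivWithin (fun s => ‖u s‖) (Ici 0) x ≤
      γ x * ‖u x‖ + α x * ‖u (x - τ)‖ ^ p + β x := by
    refine le_of_mul_le_mul_left ?_ hpos
    linarith [huineq x hx]
  have hα' : α x * ‖u (x - τ)‖ ^ p ≤ α x * h (x - τ) ^ p :=
    mul_le_mul_of_nonneg_left (rpow_le_rpow (norm_nonneg _) hdelay hp) (hα x)
  linarith [hheq x hx]

theorem mul_nu_lt_of_delay_eq {τ p q : ℝ} (hτ : 0 ≤ τ) (hp : 0 ≤ p) (hq : 1 < q)
    {γ α β : ℝ → ℝ} (hγ : Continuous γ) (hβc : Continuous β) (hα : ∀ t, 0 ≤ α t)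
    (hβ : ∀ t, 0 ≤ β t) {h h' ζ : ℝ → ℝ} (hh0 : ∀ t, -τ ≤ t → 0 ≤ h t)
    (hhc : ContinuousOn h (Ici 0)) (hhd : ∀ t, 0 ≤ t → HasDerivWithinAt h (h' t) (Ici t) t)
    (hheq : ∀ t, 0 ≤ t → h' t = γ t * h t + α t * h (t - τ) ^ p + β t) (hhτ : 0 < h τ)
    (hζ : ∀ t, τ ≤ t → ζ t = (h τ * nu γ τ + ∫ ξ in τ..t, β ξ * nu γ ξ) / nu γ t)
    (hcond : ∀ t, τ ≤ t → α t * sig γ τ t ^ p * (q * ζ t) ^ p ≤ (q - 1) * β t) :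
    ∀ t, τ ≤ t → h t * nu γ t < q * (h τ * nu γ τ + ∫ ξ in τ..t, β ξ * nu γ ξ) := by
  have hmono := monotoneOn_mul_nu hγ hhc hhd fun x hx => by
    have := mul_nonneg (hα x) (rpow_nonneg (hh0 (x - τ) (by linarith)) p)
    linarith [hheq x hx, hβ x]
  have hβν : Continuous fun ξ => β ξ * nu γ ξ := hβc.mul (continuous_nu hγ)
  have hZ : ∀ t, HasDerivAt (fun t => q * (h τ * nu γ τ + ∫ ξ in τ..t, β ξ * nu γ ξ))
      (q * (β t * nu γ t)) t := fun t =>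
    ((intervalIntegral.integral_hasDerivAt_right (hβν.intervalIntegrable τ t)
      (hβν.stronglyMeasurableAtFilter volume _) hβν.continuousAt).const_add _).const_mul q
  refine image_lt_of_deriv_right_le_deriv_of_lt
    ((hhc.mono (Ici_subset_Ici.2 hτ)).mul (continuous_nu hγ).continuousOn)
    (fun x hx => (hhd x (hτ.trans hx)).mul_nu hγ)
    (fun x _ => (hZ x).continuousAt.continuousWithinAt) (fun x _ => (hZ x).hasDerivWithinAt)
    (by simpa using lt_mul_of_one_lt_left (mul_pos hhτ (nu_pos γ τ)) hq) fun x hx hlt => ?_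
  have hqζ : h x ≤ q * ζ x := by
    rw [hζ x hx, mul_div_assoc', le_div_iff₀ (nu_pos γ x)]
    exact hlt.le
  have hdelay : h (x - τ) ≤ sig γ τ x * (q * ζ x) :=
    (le_sig_mul_of_monotoneOn hγ hmono hτ hx).trans
      (mul_le_mul_of_nonneg_left hqζ (sig_pos γ τ x).le)
  have hα' : α x * h (x - τ) ^ p ≤ (q - 1) * β x := calc
    α x * h (x - τ) ^ p ≤ α x * (sig γ τ x * (q * ζ x)) ^ p :=
      mul_le_mul_of_nonneg_left (rpow_le_rpow (hh0 _ (by linarith)) hdelay hp) (hα x)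
    _ = α x * sig γ τ x ^ p * (q * ζ x) ^ p := by
      rw [mul_rpow (sig_pos γ τ x).le ((hh0 x (by linarith)).trans hqζ), mul_assoc]
    _ ≤ (q - 1) * β x := hcond x hx
  rw [hheq x (hτ.trans hx)]
  nlinarith [nu_pos γ x]

theorem le_div_of_mul_nu_le {γ h : ℝ → ℝ} (hγ : Continuous γ) {C M τ t : ℝ} (h0 : 0 ≤ h t)
    (hC : h t * nu γ t ≤ C) (hM : ∫ ξ in τ..t, γ ξ ≤ M) :
    h t ≤ C / (nu γ τ * exp (-M)) := by
  have hν : nu γ τ * exp (-M) ≤ nu γ t := by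
    rw [nu_eq_mul_exp hγ τ t]
    exact mul_le_mul_of_nonneg_left (exp_le_exp.2 (neg_le_neg hM)) (nu_pos γ τ).le
  rw [le_div_iff₀ (mul_pos (nu_pos γ τ) (exp_pos _))]
  exact (mul_le_mul_of_nonneg_left hν h0).trans hC

theorem stmt_13_general
    {H : Type*} [NormedAddCommGroup H] [InnerProductSpace ℂ H]
    (τ p : ℝ) (hτ : 0 < τ) (hp : 1 < p)
    (γ α β : ℝ → ℝ)
    (hγc : Continuous γ) (hβc : Continuous β)
    (hα : ∀ t, 0 ≤ α t) (hβ : ∀ t, 0 ≤ β t)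
    (u : ℝ → H) (u' : ℝ → H)
    (huc : ContinuousOn u (Ici (-τ)))
    (hud : ∀ t, 0 ≤ t → HasDerivWithinAt u (u' t) (Ici (0:ℝ)) t)
    (hnd : ∀ t, 0 ≤ t → DifferentiableWithinAt ℝ (fun s => ‖u s‖) (Ici (0:ℝ)) t)
    (huineq : ∀ t, 0 ≤ t → (⟪u t, u' t⟫).re ≤
      γ t * ‖u t‖ ^ 2 + α t * ‖u t‖ * ‖u (t - τ)‖ ^ p + β t * ‖u t‖)
    (h h' : ℝ → ℝ)
    (hh0 : ∀ t, -τ ≤ t → 0 ≤ h t)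
    (hhc : ContinuousOn h (Ici (-τ)))
    (hhd : ∀ t, 0 ≤ t → HasDerivWithinAt h (h' t) (Ici (0:ℝ)) t)
    (hheq : ∀ t, 0 ≤ t → h' t = γ t * h t + α t * h (t - τ) ^ p + β t)
    (hinit : ∀ t, -τ ≤ t → t ≤ 0 → h t = ‖u t‖)
    (hhτ : 0 < h τ)
    (q : ℝ) (hq : 1 < q)
    (ζ : ℝ → ℝ)
    (hζ : ∀ t, τ ≤ t →
      ζ t = (h τ * nu γ τ + ∫ ξ in τ..t, β ξ * nu γ ξ) / nu γ t)
    (hcond : ∀ t, τ ≤ t → α t * sig γ τ t ^ p * (q * ζ t) ^ p ≤ (q - 1) * β t)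
    (hM : BddAbove {x : ℝ | ∃ t, τ ≤ t ∧ x = ∫ ξ in τ..t, γ ξ})
    (hβν : IntegrableOn (fun ξ => β ξ * nu γ ξ) (Ici τ)) :
    ∃ B : ℝ, ∀ t, -τ ≤ t → ‖u t‖ ≤ B := by
  have hnorm_le := norm_le_of_delay_comparison hτ (by linarith) hγc hα huc hud hnd huineq
    (fun t ht => hh0 t (by linarith)) hhc hhd (fun t ht => (hheq t ht).ge)
    fun t ht => (hinit t ht.1 ht.2).ge
  have hmain := mul_nu_lt_of_delay_eq hτ.le (by linarith) hq hγc hβc hα hβ hh0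
    (hhc.mono (Ici_subset_Ici.2 (by linarith)))
    (fun t ht => (hhd t ht).mono (Ici_subset_Ici.2 ht)) hheq hhτ hζ hcond
  obtain ⟨M, hM⟩ := hM
  set K := q * (h τ * nu γ τ + ∫ ξ in Ici τ, β ξ * nu γ ξ) / (nu γ τ * exp (-M))
  have hfar : ∀ t, τ ≤ t → h t ≤ K := fun t ht => by
    have hint : ∫ ξ in τ..t, β ξ * nu γ ξ ≤ ∫ ξ in Ici τ, β ξ * nu γ ξ := by
      rw [intervalIntegral.integral_of_le ht]
      exact setIntegral_mono_set hβν (ae_of_all _ fun x => mul_nonneg (hβ x) (nu_pos γ x).le)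
        (Ioc_subset_Icc_self.trans Icc_subset_Ici_self : Ioc τ t ⊆ Ici τ).eventuallyLE
    refine le_div_of_mul_nu_le hγc (hh0 t (by linarith)) ((hmain t ht).le.trans ?_)
      (hM ⟨t, ht, rfl⟩)
    gcongr
  obtain ⟨K', hnear⟩ := isCompact_Icc.bddAbove_image
    (hhc.mono (Icc_subset_Ici_self : Icc (-τ) τ ⊆ Ici (-τ)))
  refine ⟨max K' K, fun t ht => (hnorm_le t ht).trans ?_⟩
  rcases le_total t τ with hle | hge
  · exact (hnear ⟨t, ⟨ht, hle⟩, rfl⟩).trans (le_max_left _ _)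
  · exact (hfar t hge).trans (le_max_right _ _)

/-- Theorem 2.7 (Theorem 2), boundedness: if moreover `sup_{t≥τ} ∫_τ^t γ < ∞` and `∫_τ^∞ β ν < ∞`, then `u` is bounded on `[−τ,∞)`. -/
theorem stmt_13
    {H : Type*} [NormedAddCommGroup H] [InnerProductSpace ℂ H]
    (τ p : ℝ) (hτ : 0 < τ) (hp : 1 < p)
    (γ α β : ℝ → ℝ)
    (hγc : Continuous γ) (hαc : Continuous α) (hβc : Continuous β)
    (hα : ∀ t, 0 ≤ α t) (hβ : ∀ t, 0 ≤ β t)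
    (u : ℝ → H) (u' : ℝ → H)
    (huc : ContinuousOn u (Ici (-τ)))
    (hud : ∀ t, 0 ≤ t → HasDerivWithinAt u (u' t) (Ici (0:ℝ)) t)
    (hnd : ∀ t, 0 ≤ t → DifferentiableWithinAt ℝ (fun s => ‖u s‖) (Ici (0:ℝ)) t)
    (huineq : ∀ t, 0 ≤ t → (⟪u t, u' t⟫).re ≤
      γ t * ‖u t‖ ^ 2 + α t * ‖u t‖ * ‖u (t - τ)‖ ^ p + β t * ‖u t‖)
    (h h' : ℝ → ℝ)
    (hh0 : ∀ t, -τ ≤ t → 0 ≤ h t)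
    (hhc : ContinuousOn h (Ici (-τ)))
    (hhd : ∀ t, 0 ≤ t → HasDerivWithinAt h (h' t) (Ici (0:ℝ)) t)
    (hheq : ∀ t, 0 ≤ t → h' t = γ t * h t + α t * h (t - τ) ^ p + β t)
    (hinit : ∀ t, -τ ≤ t → t ≤ 0 → h t = ‖u t‖)
    (hhτ : 0 < h τ)
    (q : ℝ) (hq : 1 < q)
    (ζ : ℝ → ℝ)
    (hζ : ∀ t, τ ≤ t →
      ζ t = (h τ * nu γ τ + ∫ ξ in τ..t, β ξ * nu γ ξ) / nu γ t)
    (hcond : ∀ t, τ ≤ t → α t * sig γ τ t ^ p * (q * ζ t) ^ p ≤ (q - 1) * β t)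
    (hM : BddAbove {x : ℝ | ∃ t, τ ≤ t ∧ x = ∫ ξ in τ..t, γ ξ})
    (hβν : IntegrableOn (fun ξ => β ξ * nu γ ξ) (Ici τ)) :
    ∃ B : ℝ, ∀ t, -τ ≤ t → ‖u t‖ ≤ B :=
  stmt_13_general τ p hτ hp γ α β hγc hβc hα hβ u u' huc hud hnd huineq h h' hh0 hhc hhd hheq hinit
    hhτ q hq ζ hζ hcond hM hβν
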